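/- arXiv:2306.08791 — 7 statements merged into one kernel-verified Lean document; each statement's English description precedes it below -/
import Mathlib

section
/- Let n ≥ 1 and let E : Fin n → ℝ with E k > 0 for all k and E nonincreasing (E k ≥ E (k+1)). Define S_k = ∑_{j=1}^k 1/E_j and let r be an index maximizing (k - 1/2)/S_k over k ∈ {1,…,n} (lowest index in case of ties). Define μ_k = 1 - (1/E_k)·(r - 1/2)/S_r for k ≤ r and μ_k = 0 for k > r. Then μ_k ≥ 0 for all k. -/
open Finset

/-- μ_k ≥ 0 for the dual multipliers in the explicit a=b=d=0 solution. -/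
theorem stmt0 (n : ℕ) (hn : 0 < n) (E : Fin n → ℝ)
    (hEpos : ∀ k, 0 < E k)
    (hEmono : ∀ k l : Fin n, k ≤ l → E l ≤ E k)
    (S : Fin n → ℝ) (hS : ∀ k, S k = ∑ j ∈ Finset.Iic k, 1 / E j)
    (φ : Fin n → ℝ) (hφ : ∀ k, φ k = (((k.val : ℝ) + 1) - 1/2) / S k)
    (r : Fin n) (hr_max : ∀ k, φ k ≤ φ r)
    (hr_min : ∀ k, φ k = φ r → r ≤ k)
    (μ : Fin n → ℝ)
    (hμ : ∀ k, μ k = if k ≤ r then 1 - (1 / E k) * φ r else 0) :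
    ∀ k, 0 ≤ μ k := by
  have hSpos : ∀ k : Fin n, 0 < S k := by
    intro k
    rw [hS]
    apply Finset.sum_pos
    · intro j _
      have := hEpos j
      positivity
    · exact ⟨k, Finset.mem_Iic.mpr le_rfl⟩
  have key : φ r ≤ E r := by
    rcases Nat.eq_zero_or_pos r.val with h0 | hpos
    · have hIic : Finset.Iic r = {r} := by
        ext x
        simp only [Finset.mem_Iic, Finset.mem_singleton, Fin.le_def, Fin.ext_iff, h0]
        omega
      have hSr : S r = 1 / E r := by rw [hS, hIic, Finset.sum_singleton]
      rw [hφ, hSr, h0]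
      have hE := hEpos r
      rw [div_le_iff₀ (by positivity)]
      have h2 : E r * (1 / E r) = 1 := by field_simp
      push_cast
      linarith
    · obtain ⟨m, hm⟩ : ∃ m, r.val = m + 1 := ⟨r.val - 1, by omega⟩
      set r' : Fin n := ⟨m, by omega⟩ with hr'
      have hsplit : Finset.Iic r = insert r (Finset.Iic r') := by
        ext x
        simp only [Finset.mem_Iic, Finset.mem_insert, Fin.le_def, Fin.ext_iff, hm, hr']
        omega
      have hnotmem : r ∉ Finset.Iic r' := by
        simp only [Finset.mem_Iic, Fin.le_def, hm, hr']
        omega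
      have hSr : S r = 1 / E r + S r' := by
        rw [hS, hS, hsplit, Finset.sum_insert hnotmem]
      have hmax := hr_max r'
      rw [hφ r', hφ r] at hmax
      rw [hφ r]
      have hS'pos := hSpos r'
      have hSrpos := hSpos r
      have hEr := hEpos r
      rw [div_le_div_iff₀ hS'pos hSrpos] at hmax
      rw [div_le_iff₀ hSrpos]
      have hval' : ((r'.val : ℕ) : ℝ) = m := by simp [hr']
      have hval : ((r.val : ℕ) : ℝ) = m + 1 := by rw [hm]; push_cast; ring
      rw [hval'] at hmax
      rw [hval] at hmax ⊢
      rw [hSr] at hmax ⊢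
      have h2 : E r * (1 / E r) = 1 := by field_simp
      nlinarith [mul_le_mul_of_nonneg_left hmax (le_of_lt hEr), mul_pos hEr hS'pos]
  intro k
  rw [hμ]
  split_ifs with h
  · have hEk := hEpos k
    have hle : E r ≤ E k := hEmono k r h
    have hφle : φ r ≤ E k := le_trans key hle
    have hinv : 0 < 1 / E k := by positivity
    nlinarith [mul_le_mul_of_nonneg_left hφle (le_of_lt hinv), mul_one_div_cancel (ne_of_gt hEk)]
  · exact le_refl 0
end

section
/- Let n ≥ 1 and let E : Fin n → ℝ be positive and nonincreasing, S_k = ∑_{j=1}^k 1/E_j, r the smallest index maximizing (k - 1/2)/S_k, and μ as above. Then E_k·(1 - μ_k) = (r - 1/2)/S_r for all k ≤ r, and E_k·(1 - μ_k) ≤ (r - 1/2)/S_r for all k > r. -/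
/-!
Writing `φ r = a / S_r`, we have `φ (r+1) = (a + 1) / (S_r + 1/E_{r+1})`, a mediant of `φ r` and
`E_{r+1} = 1 / (1/E_{r+1})`. So `φ (r+1) ≤ φ r` forces `E_{r+1} ≤ φ r`, and monotonicity of `E`
bounds every `E_k` with `k > r`. For `k ≤ r` the identity is immediate from the definition of `μ`.
-/

open Finset

theorem div_le_of_add_div_add_le {α : Type*} [Field α] [LinearOrder α] [IsStrictOrderedRing α]
    {a b c d : α} (hb : 0 < b) (hd : 0 < d) (h : (a + c) / (b + d) ≤ a / b) : c / d ≤ a / b := by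
  rw [div_le_div_iff₀ (add_pos hb hd) hb] at h
  rw [div_le_div_iff₀ hd hb]
  linarith

theorem le_div_of_add_one_div_add_inv_le {a s e : ℝ} (hs : 0 < s) (he : 0 < e)
    (h : (a + 1) / (s + 1 / e) ≤ a / s) : e ≤ a / s := by
  simpa using div_le_of_add_div_add_le hs (one_div_pos.mpr he) h

theorem Fin.sum_Iic_of_val_eq_add_one {M : Type*} [AddCommMonoid M] {n : ℕ} (f : Fin n → M)
    {r j : Fin n} (h : j.val = r.val + 1) : ∑ i ∈ Iic j, f i = ∑ i ∈ Iic r, f i + f j := by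
  rw [← sum_Iio_add_eq_sum_Iic]
  congr 2
  ext i
  simp only [mem_Iio, mem_Iic, Fin.lt_def, Fin.le_def]
  omega

theorem stmt2_general (n : ℕ) (E : Fin n → ℝ)
    (hEpos : ∀ k, 0 < E k)
    (hEmono : ∀ k l : Fin n, k ≤ l → E l ≤ E k)
    (S : Fin n → ℝ) (hS : ∀ k, S k = ∑ j ∈ Finset.Iic k, 1 / E j)
    (φ : Fin n → ℝ) (hφ : ∀ k, φ k = (((k.val : ℝ) + 1) - 1/2) / S k)
    (r : Fin n) (hr_max : ∀ k, φ k ≤ φ r)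
    (μ : Fin n → ℝ)
    (hμ : ∀ k, μ k = if k ≤ r then 1 - (1 / E k) * φ r else 0) :
    (∀ k, k ≤ r → E k * (1 - μ k) = φ r) ∧
    (∀ k, r < k → E k * (1 - μ k) ≤ φ r) := by
  refine ⟨fun k hk => ?_, fun k hk => ?_⟩
  · rw [hμ k, if_pos hk]
    field_simp [(hEpos k).ne']
    ring
  · rw [hμ k, if_neg hk.not_ge, sub_zero, mul_one]
    let j : Fin n := ⟨r.val + 1, by omega⟩
    have hSr : 0 < S r := by
      rw [hS r]
      exact sum_pos (fun i _ => one_div_pos.mpr (hEpos i)) ⟨r, mem_Iic.mpr le_rfl⟩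
    have hφj : φ j = ((r.val : ℝ) + 1 - 1/2 + 1) / (S r + 1 / E j) := by
      rw [hφ j, hS j, Fin.sum_Iic_of_val_eq_add_one _ rfl, ← hS r, Fin.val_mk]
      push_cast
      ring
    have hEj : E j ≤ φ r := by
      rw [hφ r]
      apply le_div_of_add_one_div_add_inv_le hSr (hEpos j)
      rw [← hφj, ← hφ r]
      exact hr_max j
    exact (hEmono j k (Fin.le_def.mpr (by simp only [j]; omega))).trans hEj

/-- E_k (1-μ_k) equals (r-1/2)/S_r for k ≤ r and is at most it for k > r. -/
theorem stmt2 (n : ℕ) (hn : 0 < n) (E : Fin n → ℝ)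
    (hEpos : ∀ k, 0 < E k)
    (hEmono : ∀ k l : Fin n, k ≤ l → E l ≤ E k)
    (S : Fin n → ℝ) (hS : ∀ k, S k = ∑ j ∈ Finset.Iic k, 1 / E j)
    (φ : Fin n → ℝ) (hφ : ∀ k, φ k = (((k.val : ℝ) + 1) - 1/2) / S k)
    (r : Fin n) (hr_max : ∀ k, φ k ≤ φ r)
    (hr_min : ∀ k, φ k = φ r → r ≤ k)
    (μ : Fin n → ℝ)
    (hμ : ∀ k, μ k = if k ≤ r then 1 - (1 / E k) * φ r else 0) :
    (∀ k, k ≤ r → E k * (1 - μ k) = φ r) ∧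
    (∀ k, r < k → E k * (1 - μ k) ≤ φ r) :=
  stmt2_general n E hEpos hEmono S hS φ hφ r hr_max μ hμ
end

section
/- Let n ≥ 1 and E : Fin n → ℝ be positive and nonincreasing. Define f(p) = ∑_k p_k E_k - (1/2)·max_k p_k E_k on the probability simplex I = {p ∈ ℝ^n : p_k ≥ 0, ∑ p_k = 1}. Let S_k = ∑_{j=1}^k 1/E_j and r the smallest index maximizing (k - 1/2)/S_k. Then the vector p* with p*_k = 1/(E_k S_r) for k ≤ r and p*_k = 0 for k > r lies in I and maximizes f over I. -/
/-! For `q` in the simplex let `M = max_k q_k E_k`. Since `q_k ≤ M / E_k`, splitting the indices at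
a level `c` with `c ≤ E_k` exactly for `k ≤ m` gives `∑ q_k E_k ≤ c + M (m + 1) - M c S_m`.
Take `m` maximal with `M S_m ≤ 1` and `c = E_{m+1}` (or `m` last and `c = 0`): then `M` lies in
`[1 / S_{m+1}, 1 / S_m]`, where the bound on `f q` is affine in `M` with endpoint values `φ_{m+1}` and
`φ_m`. So `f q ≤ max_k φ_k = φ_r = f p*`. -/

open Finset

theorem sum_mul_le_of_forall_mul_le {ι : Type*} [Fintype ι] (s : Finset ι) {E q : ι → ℝ}
    {M c : ℝ} (hE : ∀ k ∈ s, 0 < E k) (hq : ∀ k, 0 ≤ q k) (hM : ∀ k, q k * E k ≤ M)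
    (hs : ∀ k ∈ s, c ≤ E k) (hsc : ∀ k ∉ s, E k ≤ c) :
    ∑ k, q k * E k ≤ c * ∑ k, q k + M * #s - M * c * ∑ k ∈ s, 1 / E k := by
  classical
  have head : ∀ k ∈ s, q k * E k ≤ q k * c + (M - M * c * (1 / E k)) := fun k hk => by
    have hEk := hE k hk
    -- the difference is `(q k * E k - M) * (E k - c) / E k`
    have : (q k * E k - M) * (E k - c) ≤ 0 :=
      mul_nonpos_of_nonpos_of_nonneg (by linarith [hM k]) (by linarith [hs k hk])
    field_simp
    nlinarith
  calc ∑ k, q k * E k = ∑ k ∈ s, q k * E k + ∑ k ∈ univ \ s, q k * E k := by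
        rw [← sum_sdiff (subset_univ s), add_comm]
    _ ≤ ∑ k ∈ s, (q k * c + (M - M * c * (1 / E k))) + ∑ k ∈ univ \ s, q k * c := by
        refine add_le_add (sum_le_sum head) (sum_le_sum fun k hk => ?_)
        exact mul_le_mul_of_nonneg_left (hsc k (mem_sdiff.1 hk).2) (hq k)
    _ = c * ∑ k, q k + M * #s - M * c * ∑ k ∈ s, 1 / E k := by
        rw [← sum_sdiff (subset_univ s), sum_add_distrib, sum_sub_distrib, ← sum_mul, ← sum_mul,
          ← mul_sum, sum_const, nsmul_eq_mul]
        ring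

section Fin

variable {n : ℕ} {E : Fin n → ℝ}

noncomputable def prefixSumInv (E : Fin n → ℝ) (k : Fin n) : ℝ := ∑ j ∈ Iic k, 1 / E j

noncomputable def equalizedValue (E : Fin n → ℝ) (k : Fin n) : ℝ :=
  (((k.val : ℝ) + 1) - 1/2) / prefixSumInv E k

noncomputable def equalizer (E : Fin n → ℝ) (r k : Fin n) : ℝ :=
  if k ≤ r then 1 / (E k * prefixSumInv E r) else 0

theorem prefixSumInv_pos (hE : ∀ k, 0 < E k) (k : Fin n) : 0 < prefixSumInv E k :=
  sum_pos (fun j _ => one_div_pos.2 (hE j)) ⟨k, mem_Iic.2 le_rfl⟩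

theorem equalizer_mul_self (hE : ∀ k, 0 < E k) (r k : Fin n) :
    equalizer E r k * E k = if k ≤ r then 1 / prefixSumInv E r else 0 := by
  unfold equalizer
  split_ifs
  · field_simp [(hE k).ne']
  · exact zero_mul _

theorem equalizer_nonneg (hE : ∀ k, 0 < E k) (r k : Fin n) : 0 ≤ equalizer E r k := by
  unfold equalizer
  have := prefixSumInv_pos hE r
  have := hE k
  split_ifs <;> positivity

theorem sum_equalizer (hE : ∀ k, 0 < E k) (r : Fin n) : ∑ k, equalizer E r k = 1 := by
  have hS := (prefixSumInv_pos hE r).ne'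
  calc ∑ k, equalizer E r k = ∑ k ∈ Iic r, 1 / E k / prefixSumInv E r := by
        simp only [equalizer, ← sum_filter, filter_ge_eq_Iic, div_div]
    _ = 1 := by rw [← sum_div, ← prefixSumInv, div_self hS]

end Fin

section FinSucc

variable {n : ℕ} {E q : Fin (n + 1) → ℝ} {M : ℝ}

theorem prefixSumInv_zero : prefixSumInv E 0 = 1 / E 0 := by
  rw [prefixSumInv, ← bot_eq_zero, Iic_bot, sum_singleton]

theorem prefixSumInv_succ (i : Fin n) :
    prefixSumInv E i.succ = prefixSumInv E i.castSucc + 1 / E i.succ := by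
  have : Iio i.succ = Iic i.castSucc := by ext k; simp [Fin.le_castSucc_iff]
  rw [prefixSumInv, ← Iio_insert, sum_insert (by simp), this, prefixSumInv, add_comm]

theorem sum_mul_sub_half_le_max_of_mem_Icc (hE : ∀ k, 0 < E k) (hanti : Antitone E)
    (hq : ∀ k, 0 ≤ q k) (hq1 : ∑ k, q k = 1) (hM : ∀ k, q k * E k ≤ M) (i : Fin n)
    (hlo : 1 / prefixSumInv E i.succ ≤ M) (hhi : M ≤ 1 / prefixSumInv E i.castSucc) :
    ∑ k, q k * E k - 1/2 * M ≤ max (equalizedValue E i.castSucc) (equalizedValue E i.succ) := by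
  have key := sum_mul_le_of_forall_mul_le (Iic i.castSucc) (c := E i.succ) (fun k _ => hE k) hq hM
    (fun k hk => hanti ((mem_Iic.1 hk).trans_lt Fin.castSucc_lt_succ).le)
    (fun k hk => hanti (Fin.castSucc_lt_iff_succ_le.1 (not_le.1 (mt mem_Iic.2 hk))))
  rw [hq1, Fin.card_Iic, ← prefixSumInv, Fin.val_castSucc] at key
  set a := ((i : ℝ) + 1/2) - E i.succ * prefixSumInv E i.castSucc with ha_def
  have hf : ∑ k, q k * E k - 1/2 * M ≤ a * M + E i.succ := by
    push_cast at key; linear_combination key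
  have hS := prefixSumInv_pos hE i.castSucc
  have hc := hE i.succ
  rcases le_total 0 a with ha | ha
  · refine le_max_of_le_left (hf.trans ?_)
    calc a * M + E i.succ ≤ a * (1 / prefixSumInv E i.castSucc) + E i.succ := by gcongr
      _ = equalizedValue E i.castSucc := by
        rw [equalizedValue, Fin.val_castSucc, ha_def]; field_simp; ring
  · refine le_max_of_le_right (hf.trans ?_)
    calc a * M + E i.succ ≤ a * (1 / prefixSumInv E i.succ) + E i.succ := by
          gcongr ?_ + _; exact mul_le_mul_of_nonpos_left hlo ha
      _ = equalizedValue E i.succ := by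
        rw [equalizedValue, prefixSumInv_succ, Fin.val_succ, ha_def]; field_simp; push_cast; ring

theorem sum_mul_sub_half_le_equalizedValue_last (hM : ∀ k, q k * E k ≤ M)
    (hhi : M ≤ 1 / prefixSumInv E (Fin.last n)) :
    ∑ k, q k * E k - 1/2 * M ≤ equalizedValue E (Fin.last n) := by
  have hsum : ∑ k, q k * E k ≤ (n + 1) * M := by
    simpa using sum_le_card_nsmul univ (fun k => q k * E k) M fun k _ => hM k
  calc ∑ k, q k * E k - 1/2 * M ≤ (n + 1/2) * M := by linarith
    _ ≤ (n + 1/2) * (1 / prefixSumInv E (Fin.last n)) := by gcongr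
    _ = equalizedValue E (Fin.last n) := by rw [equalizedValue, Fin.val_last]; ring

theorem exists_sum_mul_sub_half_le_equalizedValue (hE : ∀ k, 0 < E k) (hanti : Antitone E)
    (hq : ∀ k, 0 ≤ q k) (hq1 : ∑ k, q k = 1) (hM : ∀ k, q k * E k ≤ M) (hM0 : M ≤ E 0) :
    ∃ k, ∑ k, q k * E k - 1/2 * M ≤ equalizedValue E k := by
  set t := univ.filter fun k => M ≤ 1 / prefixSumInv E k
  have ht : t.Nonempty := ⟨0, by simpa [t, prefixSumInv_zero] using hM0⟩
  have hhi : M ≤ 1 / prefixSumInv E (t.max' ht) := (mem_filter.1 (t.max'_mem ht)).2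
  rcases Fin.eq_castSucc_or_eq_last (t.max' ht) with ⟨i, hi⟩ | hlast
  · have hlo : 1 / prefixSumInv E i.succ ≤ M := by
      by_contra! h
      have := t.le_max' i.succ (mem_filter.2 ⟨mem_univ _, h.le⟩)
      exact (hi ▸ this).not_gt Fin.castSucc_lt_succ
    have := sum_mul_sub_half_le_max_of_mem_Icc hE hanti hq hq1 hM i hlo (hi ▸ hhi)
    rcases max_choice (equalizedValue E i.castSucc) (equalizedValue E i.succ) with h | h <;>
      exact ⟨_, h ▸ this⟩
  · exact ⟨_, sum_mul_sub_half_le_equalizedValue_last hM (hlast ▸ hhi)⟩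

noncomputable def worstCaseUtility (E q : Fin (n + 1) → ℝ) : ℝ :=
  ∑ k, q k * E k - 1/2 * univ.sup' univ_nonempty fun k => q k * E k

theorem exists_worstCaseUtility_le_equalizedValue (hE : ∀ k, 0 < E k) (hanti : Antitone E)
    (hq : ∀ k, 0 ≤ q k) (hq1 : ∑ k, q k = 1) : ∃ k, worstCaseUtility E q ≤ equalizedValue E k := by
  refine exists_sum_mul_sub_half_le_equalizedValue hE hanti hq hq1
    (fun k => le_sup' (fun k => q k * E k) (mem_univ k)) (sup'_le _ _ fun k _ => ?_)
  have hq_le : q k ≤ 1 := hq1 ▸ single_le_sum (fun j _ => hq j) (mem_univ k)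
  calc q k * E k ≤ 1 * E k := by gcongr; exact (hE k).le
    _ ≤ E 0 := by rw [one_mul]; exact hanti (Fin.zero_le k)

theorem worstCaseUtility_equalizer (hE : ∀ k, 0 < E k) (r : Fin (n + 1)) :
    worstCaseUtility E (equalizer E r) = equalizedValue E r := by
  have hsup : univ.sup' univ_nonempty (fun k => equalizer E r k * E k) = 1 / prefixSumInv E r := by
    refine le_antisymm (sup'_le _ _ fun k _ => ?_) ?_
    · rw [equalizer_mul_self hE]
      split_ifs
      exacts [le_rfl, (one_div_pos.2 (prefixSumInv_pos hE r)).le]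
    · exact le_sup'_of_le _ (mem_univ 0) (by simp [equalizer_mul_self hE])
  rw [worstCaseUtility, hsup, equalizedValue]
  simp only [equalizer_mul_self hE, ← sum_filter, filter_ge_eq_Iic, sum_const, Fin.card_Iic,
    nsmul_eq_mul]
  push_cast
  ring

end FinSucc

theorem stmt3_general (n : ℕ) (hn : 0 < n) (E : Fin n → ℝ)
    (hEpos : ∀ k, 0 < E k)
    (hEmono : ∀ k l : Fin n, k ≤ l → E l ≤ E k)
    (S : Fin n → ℝ) (hS : ∀ k, S k = ∑ j ∈ Finset.Iic k, 1 / E j)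
    (φ : Fin n → ℝ) (hφ : ∀ k, φ k = (((k.val : ℝ) + 1) - 1/2) / S k)
    (r : Fin n) (hr_max : ∀ k, φ k ≤ φ r)
    (p : Fin n → ℝ)
    (hp : ∀ k, p k = if k ≤ r then 1 / (E k * S r) else 0) :
    ((∀ k, 0 ≤ p k) ∧ ∑ k, p k = 1) ∧
    (∀ q : Fin n → ℝ, (∀ k, 0 ≤ q k) → ∑ k, q k = 1 →
      (∑ k, q k * E k) -
          (1/2) * Finset.univ.sup' ⟨⟨0, hn⟩, Finset.mem_univ _⟩ (fun k => q k * E k)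
        ≤ (∑ k, p k * E k) -
          (1/2) * Finset.univ.sup' ⟨⟨0, hn⟩, Finset.mem_univ _⟩ (fun k => p k * E k)) := by
  obtain ⟨n, rfl⟩ := Nat.exists_eq_add_one_of_ne_zero hn.ne'
  obtain rfl : S = prefixSumInv E := funext hS
  obtain rfl : φ = equalizedValue E := funext hφ
  obtain rfl : p = equalizer E r := funext hp
  refine ⟨⟨equalizer_nonneg hEpos r, sum_equalizer hEpos r⟩, fun q hq hq1 => ?_⟩
  obtain ⟨k, hk⟩ := exists_worstCaseUtility_le_equalizedValue hEpos (fun k l => hEmono k l) hq hq1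
  change worstCaseUtility E q ≤ worstCaseUtility E (equalizer E r)
  rw [worstCaseUtility_equalizer hEpos]
  exact hk.trans (hr_max k)

/-- The explicit vector p* solves the worst-case utility problem (P2) when a=b=d=0. -/
theorem stmt3 (n : ℕ) (hn : 0 < n) (E : Fin n → ℝ)
    (hEpos : ∀ k, 0 < E k)
    (hEmono : ∀ k l : Fin n, k ≤ l → E l ≤ E k)
    (S : Fin n → ℝ) (hS : ∀ k, S k = ∑ j ∈ Finset.Iic k, 1 / E j)
    (φ : Fin n → ℝ) (hφ : ∀ k, φ k = (((k.val : ℝ) + 1) - 1/2) / S k)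
    (r : Fin n) (hr_max : ∀ k, φ k ≤ φ r)
    (hr_min : ∀ k, φ k = φ r → r ≤ k)
    (p : Fin n → ℝ)
    (hp : ∀ k, p k = if k ≤ r then 1 / (E k * S r) else 0) :
    ((∀ k, 0 ≤ p k) ∧ ∑ k, p k = 1) ∧
    (∀ q : Fin n → ℝ, (∀ k, 0 ≤ q k) → ∑ k, q k = 1 →
      (∑ k, q k * E k) -
          (1/2) * Finset.univ.sup' ⟨⟨0, hn⟩, Finset.mem_univ _⟩ (fun k => q k * E k)
        ≤ (∑ k, p k * E k) -
          (1/2) * Finset.univ.sup' ⟨⟨0, hn⟩, Finset.mem_univ _⟩ (fun k => p k * E k)) :=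
  stmt3_general n hn E hEpos hEmono S hS φ hφ r hr_max p hp
end

section
/- With f(x) = ∑_{j∈A} x_j + ∑_{j∈A^c} E_j x_j - (1/2)·E[max_{1≤j≤n} Ω_j x_j], where Ω_j = 1 a.s. for j ∈ A, Ω_j ≥ 0 a.s. with E[Ω_j] = E_j for j ∈ A^c: if x ≥ y entrywise with x, y ∈ ℝ^n nonnegative, then f(x) - f(y) ≥ (1/2)∑_{j∈A}(x_j - y_j) + (1/2)∑_{j∈A^c} E_j (x_j - y_j) ≥ 0; in particular f is entrywise nondecreasing on the nonnegative orthant. -/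
open Finset MeasureTheory

/-!
Raising the coordinates from `y` to `x` raises each term `Ω_j x_j`, hence the maximum, by at
most `Ω_j (x_j - y_j) ≤ ∑_i Ω_i (x_i - y_i)` (all increments are nonnegative). Taking
expectations, `E[max Ω_j x_j]` grows by at most `∑_{A} (x_j - y_j) + ∑_{Aᶜ} E_j (x_j - y_j)`,
which is exactly the growth of the linear part of `f`; the factor `1/2` leaves half of it.
-/

theorem MeasureTheory.Integrable.finset_sup' {α ι β : Type*} [MeasurableSpace α] {μ : Measure α}
    [NormedAddCommGroup β] [Lattice β] [HasSolidNorm β] [IsOrderedAddMonoid β]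
    {s : Finset ι} (hs : s.Nonempty) {g : ι → α → β} (hg : ∀ i ∈ s, Integrable (g i) μ) :
    Integrable (fun a => s.sup' hs fun i => g i a) μ := by
  have hsup : Integrable (s.sup' hs g) μ :=
    sup'_induction (p := fun g => Integrable g μ) hs _ (fun _ h₁ _ h₂ => h₁.sup h₂) hg
  convert hsup using 1
  exact funext fun a => (Finset.sup'_apply hs g a).symm

theorem Finset.sup'_le_sup'_add_sum_sub {ι α : Type*} [AddCommGroup α] [LinearOrder α]
    [IsOrderedAddMonoid α] {s : Finset ι} (hs : s.Nonempty) {u v : ι → α}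
    (huv : ∀ i ∈ s, u i ≤ v i) :
    s.sup' hs v ≤ s.sup' hs u + ∑ i ∈ s, (v i - u i) :=
  sup'_le hs _ fun j hj => by
    have hu := le_sup' u hj
    have hsum := single_le_sum (fun i hi => sub_nonneg.2 (huv i hi)) hj
    calc v j = u j + (v j - u j) := (add_sub_cancel _ _).symm
      _ ≤ s.sup' hs u + ∑ i ∈ s, (v i - u i) := add_le_add hu hsum

theorem integral_sup'_mul_le_add_sum {Ω ι : Type*} [MeasurableSpace Ω] {μ : Measure Ω}
    [Fintype ι] {W : Ω → ι → ℝ} (hW : ∀ i, ∀ᵐ ω ∂μ, 0 ≤ W ω i)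
    (hW_int : ∀ i, Integrable (fun ω => W ω i) μ) (hι : (univ : Finset ι).Nonempty)
    {x y : ι → ℝ} (hxy : ∀ i, y i ≤ x i) :
    ∫ ω, univ.sup' hι (fun i => W ω i * x i) ∂μ ≤
      ∫ ω, univ.sup' hι (fun i => W ω i * y i) ∂μ + ∑ i, (∫ ω, W ω i ∂μ) * (x i - y i) := by
  have hmax_int : ∀ z : ι → ℝ, Integrable (fun ω => univ.sup' hι fun i => W ω i * z i) μ :=
    fun z => Integrable.finset_sup' hι fun i _ => (hW_int i).mul_const (z i)
  have hsum_int : ∀ i ∈ univ, Integrable (fun ω => W ω i * (x i - y i)) μ :=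
    fun i _ => (hW_int i).mul_const _
  have hpointwise : ∀ᵐ ω ∂μ, (univ.sup' hι fun i => W ω i * x i) ≤
      (univ.sup' hι fun i => W ω i * y i) + ∑ i, W ω i * (x i - y i) := by
    filter_upwards [ae_all_iff.2 hW] with ω hω
    simpa only [mul_sub] using
      univ.sup'_le_sup'_add_sum_sub hι fun i _ => mul_le_mul_of_nonneg_left (hxy i) (hω i)
  calc _ ≤ ∫ ω, ((univ.sup' hι fun i => W ω i * y i) + ∑ i, W ω i * (x i - y i)) ∂μ :=
        integral_mono_ae (hmax_int x) ((hmax_int y).add (integrable_finsetSum _ hsum_int))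
          hpointwise
    _ = _ := by
        rw [integral_add (hmax_int y) (integrable_finsetSum _ hsum_int),
          integral_finsetSum _ hsum_int]
        simp only [integral_mul_const]

/-- Entrywise monotonicity of f on the nonnegative orthant, with quantitative bound. -/
theorem stmt7 (n : ℕ) (hn : 0 < n) {Ω : Type*} [MeasurableSpace Ω]
    (μ : Measure Ω) [IsProbabilityMeasure μ]
    (A : Finset (Fin n)) (E : Fin n → ℝ)
    (Om : Ω → Fin n → ℝ)
    (hnn : ∀ j, ∀ᵐ ω ∂μ, 0 ≤ Om ω j)
    (hone : ∀ j ∈ A, ∀ᵐ ω ∂μ, Om ω j = 1)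
    (hint : ∀ j, Integrable (fun ω => Om ω j) μ)
    (hEeq : ∀ j ∈ Aᶜ, ∫ ω, Om ω j ∂μ = E j)
    (f : (Fin n → ℝ) → ℝ)
    (hf : ∀ x, f x = (∑ j ∈ A, x j) + (∑ j ∈ Aᶜ, E j * x j)
      - (1/2) * ∫ ω, Finset.univ.sup' ⟨⟨0, hn⟩, Finset.mem_univ _⟩
          (fun j => Om ω j * x j) ∂μ) :
    ∀ x y : Fin n → ℝ, (∀ j, 0 ≤ y j) → (∀ j, y j ≤ x j) →
      (0 ≤ (1/2) * (∑ j ∈ A, (x j - y j)) + (1/2) * ∑ j ∈ Aᶜ, E j * (x j - y j)) ∧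
      ((1/2) * (∑ j ∈ A, (x j - y j)) + (1/2) * (∑ j ∈ Aᶜ, E j * (x j - y j))
        ≤ f x - f y) := by
  intro x y _ hxy
  have hd : ∀ j, 0 ≤ x j - y j := fun j => sub_nonneg.2 (hxy j)
  have hE : ∀ j ∈ Aᶜ, 0 ≤ E j := fun j hj => hEeq j hj ▸ integral_nonneg_of_ae (hnn j)
  have hmean : ∑ j, (∫ ω, Om ω j ∂μ) * (x j - y j)
      = ∑ j ∈ A, (x j - y j) + ∑ j ∈ Aᶜ, E j * (x j - y j) := by
    rw [← sum_add_sum_compl A]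
    congr 1 <;> refine sum_congr rfl fun j hj => ?_
    · simp [integral_congr_ae (hone j hj)]
    · rw [hEeq j hj]
  have hmax := integral_sup'_mul_le_add_sum hnn hint ⟨⟨0, hn⟩, mem_univ _⟩ hxy
  refine ⟨add_nonneg (mul_nonneg one_half_pos.le (sum_nonneg fun j _ => hd j))
    (mul_nonneg one_half_pos.le (sum_nonneg fun j hj => mul_nonneg (hE j hj) (hd j))), ?_⟩
  rw [hmean] at hmax
  rw [hf x, hf y]
  simp only [mul_sub, sum_sub_distrib] at hmax ⊢
  linarith
end

section
/- Let G ⊆ ℝ^n be convex with nonempty interior G⁰, C ⊆ G convex intersecting G⁰, and C⁰ = C ∩ G⁰. Let ω : G → ℝ be convex and continuously differentiable on G⁰, with Bregman divergence D_ω(x‖y) = ω(x) - ω(y) - ∇ω(y)ᵀ(x - y). Let g : G → ℝ be convex, α > 0, y ∈ C⁰, and suppose x* ∈ argmin_{x∈C} [g(x) + α D_ω(x‖y)] with x* ∈ C⁰. Then for all z ∈ C: g(x*) + α D_ω(x*‖y) ≤ g(z) + α D_ω(z‖y) - α D_ω(z‖x*). -/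
/-!
Moving from the minimizer `x` towards `z ∈ C`, convexity of `g` bounds the increase of `g` by
`t (g z - g x)`, so minimality forces the first-order condition
`g x - g z ≤ α ⟪∇w x - ∇w y, z - x⟫`. The right-hand side is exactly
`α (D z y - D z x - D x y)` by the three-point identity of Bregman divergences.
-/

open InnerProductSpace Set

section FirstOrder

variable {E : Type*} [NormedAddCommGroup E] [NormedSpace ℝ E]

theorem ConvexOn.le_add_fderiv_of_isMinOn_add {C : Set E} {g h : E → ℝ} {h' : E →L[ℝ] ℝ}
    {x z : E} (hg : ConvexOn ℝ C g) (hmin : IsMinOn (g + h) C x) (hh : HasFDerivAt h h' x)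
    (hx : x ∈ C) (hz : z ∈ C) : g x ≤ g z + h' (z - x) := by
  set v := z - x
  -- `ψ` majorizes `t ↦ (g + h) (x + t • v) - g x` on `[0, 1]` and agrees with it at `0`.
  set ψ : ℝ → ℝ := fun t => h (x + t • v) + t * (g z - g x)
  have hψ : HasDerivAt ψ (h' v + (g z - g x)) 0 := by
    have hline : HasDerivAt (fun t : ℝ => x + t • v) v 0 := by
      simpa using ((hasDerivAt_id (0 : ℝ)).smul_const v).const_add x
    have hh0 : HasFDerivAt h h' (x + (0 : ℝ) • v) := by simpa using hh
    have := (hh0.comp_hasDerivAt 0 hline).add ((hasDerivAt_id (0 : ℝ)).mul_const (g z - g x))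
    rwa [one_mul] at this
  have hψmin : IsMinOn ψ (Icc 0 1) 0 := by
    intro t ⟨ht0, ht1⟩
    have hseg : x + t • v = (1 - t) • x + t • z := by simp only [v]; module
    have hmem : x + t • v ∈ C := hseg ▸ hg.1 hx hz (by linarith) ht0 (by ring)
    have hconv : g (x + t • v) ≤ (1 - t) * g x + t * g z := by
      simpa [hseg, smul_eq_mul] using hg.2 hx hz (by linarith) ht0 (by ring)
    have := hmin hmem
    simp only [mem_ofPred_eq, Pi.add_apply] at this
    simp only [ψ, mem_ofPred_eq, zero_smul, add_zero, zero_mul]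
    linarith
  have hone : (1 : ℝ) ∈ posTangentConeAt (Icc 0 1) (0 : ℝ) :=
    mem_posTangentConeAt_of_segment_subset (by simp [segment_eq_Icc])
  have := hψmin.localize.hasFDerivWithinAt_nonneg hψ.hasFDerivAt.hasFDerivWithinAt hone
  simp only [ContinuousLinearMap.toSpanSingleton_apply, smul_eq_mul, one_mul] at this
  linarith

end FirstOrder

section Bregman

variable {E : Type*} [NormedAddCommGroup E] [InnerProductSpace ℝ E]

def bregmanDiv (w : E → ℝ) (gradw : E → E) (x y : E) : ℝ :=
  w x - w y - ⟪gradw y, x - y⟫_ℝ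

theorem bregmanDiv_three_point (w : E → ℝ) (gradw : E → E) (x y z : E) :
    bregmanDiv w gradw z y - bregmanDiv w gradw z x - bregmanDiv w gradw x y =
      ⟪gradw x - gradw y, z - x⟫_ℝ := by
  have hzy : z - y = (z - x) + (x - y) := by abel
  simp only [bregmanDiv, hzy, inner_add_right, inner_sub_left]
  ring

theorem hasGradientAt_bregmanDiv_left [CompleteSpace E] {w : E → ℝ} {gradw : E → E} {x : E}
    (hw : HasGradientAt w (gradw x) x) (y : E) :
    HasGradientAt (fun u => bregmanDiv w gradw u y) (gradw x - gradw y) x := by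
  rw [hasGradientAt_iff_hasFDerivAt] at hw ⊢
  have hlin : HasFDerivAt (fun u => ⟪gradw y, u - y⟫_ℝ) (toDual ℝ E (gradw y)) x := by
    simp_rw [inner_sub_right]
    exact (toDual ℝ E (gradw y)).hasFDerivAt.sub_const _
  rw [map_sub]
  exact (hw.sub_const (w y)).sub hlin

end Bregman

theorem stmt10_general (n : ℕ) (G C : Set (EuclideanSpace ℝ (Fin n)))
    (hCconv : Convex ℝ C) (hCG : C ⊆ G)
    (w : EuclideanSpace ℝ (Fin n) → ℝ)
    (gradw : EuclideanSpace ℝ (Fin n) → EuclideanSpace ℝ (Fin n))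
    (hgrad : ∀ x ∈ interior G, HasGradientAt w (gradw x) x)
    (D : EuclideanSpace ℝ (Fin n) → EuclideanSpace ℝ (Fin n) → ℝ)
    (hD : ∀ x y, D x y = w x - w y - (inner ℝ (gradw y) (x - y) : ℝ))
    (g : EuclideanSpace ℝ (Fin n) → ℝ) (hg : ConvexOn ℝ G g)
    (α : ℝ)
    (y : EuclideanSpace ℝ (Fin n))
    (x : EuclideanSpace ℝ (Fin n)) (hx : x ∈ C ∩ interior G)
    (hxmin : ∀ z ∈ C, g x + α * D x y ≤ g z + α * D z y) :
    ∀ z ∈ C, g x + α * D x y ≤ g z + α * D z y - α * D z x := by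
  intro z hz
  obtain rfl : D = bregmanDiv w gradw := by ext u v; exact hD u v
  have hB := ((hasGradientAt_bregmanDiv_left (hgrad x hx.2) y).hasFDerivAt).const_mul α
  have hvar := (hg.subset hCG hCconv).le_add_fderiv_of_isMinOn_add
    (h := fun u => α * bregmanDiv w gradw u y) (fun u hu => hxmin u hu) hB hx.1 hz
  have h3 := bregmanDiv_three_point w gradw x y z
  simp only [smul_apply, toDual_apply_apply, smul_eq_mul] at hvar
  linear_combination hvar - α * h3

/-- Three-point pushback property of Bregman-proximal minimization. -/
theorem stmt10 (n : ℕ) (G C : Set (EuclideanSpace ℝ (Fin n)))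
    (hGconv : Convex ℝ G) (hGint : (interior G).Nonempty)
    (hCconv : Convex ℝ C) (hCG : C ⊆ G)
    (hCint : (C ∩ interior G).Nonempty)
    (w : EuclideanSpace ℝ (Fin n) → ℝ) (hw : ConvexOn ℝ G w)
    (gradw : EuclideanSpace ℝ (Fin n) → EuclideanSpace ℝ (Fin n))
    (hgrad : ∀ x ∈ interior G, HasGradientAt w (gradw x) x)
    (D : EuclideanSpace ℝ (Fin n) → EuclideanSpace ℝ (Fin n) → ℝ)
    (hD : ∀ x y, D x y = w x - w y - (inner ℝ (gradw y) (x - y) : ℝ))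
    (g : EuclideanSpace ℝ (Fin n) → ℝ) (hg : ConvexOn ℝ G g)
    (α : ℝ) (hα : 0 < α)
    (y : EuclideanSpace ℝ (Fin n)) (hy : y ∈ C ∩ interior G)
    (x : EuclideanSpace ℝ (Fin n)) (hx : x ∈ C ∩ interior G)
    (hxmin : ∀ z ∈ C, g x + α * D x y ≤ g z + α * D z y) :
    ∀ z ∈ C, g x + α * D x y ≤ g z + α * D z y - α * D z x :=
  stmt10_general n G C hCconv hCG w gradw hgrad D hD g hg α y x hx hxmin
end

section
/- Let W be a nonnegative real random variable with continuous CDF F and finite mean, independent of a random variable Z. Fix p₁ ∈ (0,1] and let τ₁ satisfy F(τ₁) = 1 - p₁. For any measurable function P : ℝ → [0,1] with E[P(W)] = p₁, it holds that E[W·P(W)] ≤ p₁·E[W | F(W) ≥ 1 - p₁] = E[W·1{W > τ₁}]. -/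
/-!
Off a null set, `1 - p₁ ≤ F (W)` holds exactly when `τ₁ < W`: the two events differ only where
`W` lies in an interval on which the continuous CDF is constant, and such an interval carries no
mass. Hence the conditional expectation on the right is `E[W · 1{W > τ₁}] / p₁`. The inequality is
the bathtub principle: `(W - τ₁) (P(W) - 1{W > τ₁}) ≤ 0` pointwise, and integrating it uses
`E[P(W)] = p₁ = P(W > τ₁)` to cancel the `τ₁` term.
-/

open MeasureTheory ProbabilityTheory Set Filter

namespace ProbabilityTheory

variable {ν : Measure ℝ} [IsProbabilityMeasure ν]

lemma measure_Icc_eq_zero_of_cdf_le (hcont : Continuous (cdf ν)) {a b : ℝ}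
    (hab : cdf ν b ≤ cdf ν a) : ν (Icc a b) = 0 := by
  rw [← measure_cdf ν, StieltjesFunction.measure_Icc, hcont.continuousWithinAt.leftLim_eq,
    ENNReal.ofReal_eq_zero]
  linarith

lemma measure_setOf_le_and_cdf_le_eq_zero (hcont : Continuous (cdf ν)) (τ : ℝ) :
    ν {w | w ≤ τ ∧ cdf ν τ ≤ cdf ν w} = 0 := by
  set S := {w | w ≤ τ ∧ cdf ν τ ≤ cdf ν w}
  rcases S.eq_empty_or_nonempty with hS | hS
  · rw [hS, measure_empty]
  rcases (cdf_nonneg ν τ).eq_or_lt with hzero | hpos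
  · refine measure_mono_null (show S ⊆ Iic τ from fun w hw ↦ hw.1) ?_
    rw [← ofReal_cdf, ← hzero, ENNReal.ofReal_zero]
  -- `S` is bounded below because `cdf ν` tends to `0` at `-∞`, so it has a least element.
  obtain ⟨m, hm⟩ := eventually_atBot.mp ((tendsto_cdf_atBot ν).eventually (gt_mem_nhds hpos))
  have hbdd : BddBelow S := ⟨m, fun w hw ↦ le_of_not_gt fun hwm ↦ (hm w hwm.le).not_ge hw.2⟩
  have hclosed : IsClosed S :=
    (isClosed_le continuous_id continuous_const).inter (isClosed_le continuous_const hcont)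
  have hmin := hclosed.csInf_mem hS hbdd
  exact measure_mono_null (show S ⊆ Icc (sInf S) τ from fun w hw ↦ ⟨csInf_le hbdd hw, hw.1⟩)
    (measure_Icc_eq_zero_of_cdf_le hcont hmin.2)

lemma setOf_cdf_le_ae_eq_Ioi (hcont : Continuous (cdf ν)) (τ : ℝ) :
    {w | cdf ν τ ≤ cdf ν w} =ᵐ[ν] Ioi τ := by
  refine ae_eq_set.mpr ⟨measure_mono_null ?_ (measure_setOf_le_and_cdf_le_eq_zero hcont τ), ?_⟩
  · exact fun w ⟨hw, hwτ⟩ ↦ ⟨not_lt.mp hwτ, hw⟩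
  · exact measure_mono_null (fun w ⟨hwτ, hw⟩ ↦ hw ((cdf ν).mono hwτ.le)) measure_empty

end ProbabilityTheory

theorem integral_mul_le_setIntegral_of_integral_eq_measureReal {Ω : Type*} [MeasurableSpace Ω]
    {μ : Measure Ω} [IsFiniteMeasure μ] {W g : Ω → ℝ} {τ : ℝ}
    (hW : Integrable W μ) (hg : Integrable g μ) (hg01 : ∀ᵐ ω ∂μ, g ω ∈ Icc 0 1)
    (hT : MeasurableSet {ω | τ < W ω}) (hmass : ∫ ω, g ω ∂μ = μ.real {ω | τ < W ω}) :
    ∫ ω, W ω * g ω ∂μ ≤ ∫ ω in {ω | τ < W ω}, W ω ∂μ := by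
  rw [← sub_nonpos]
  set T := {ω | τ < W ω}
  set I : Ω → ℝ := T.indicator 1
  have hI : Integrable I μ := (integrable_const 1).indicator hT
  have hWg : Integrable (fun ω ↦ W ω * g ω) μ := by
    refine hW.mul_bdd (c := 1) hg.aestronglyMeasurable ?_
    filter_upwards [hg01] with ω ⟨hg0, hg1⟩
    rwa [Real.norm_of_nonneg hg0]
  have hWI : (fun ω ↦ W ω * I ω) = T.indicator W := by
    ext ω
    by_cases hω : ω ∈ T <;> simp [I, hω]
  have hsign : ∀ᵐ ω ∂μ, (W ω - τ) * (g ω - I ω) ≤ 0 := by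
    filter_upwards [hg01] with ω ⟨hg0, hg1⟩
    by_cases hω : τ < W ω
    · have : I ω = 1 := indicator_of_mem (s := T) hω 1
      exact mul_nonpos_of_nonneg_of_nonpos (by linarith) (by linarith)
    · have : I ω = 0 := indicator_of_notMem (s := T) hω 1
      exact mul_nonpos_of_nonpos_of_nonneg (by linarith) (by linarith)
  have hWI_int : Integrable (fun ω ↦ W ω * I ω) μ := hWI ▸ hW.indicator hT
  have hdiff : Integrable (fun ω ↦ W ω * g ω - W ω * I ω) μ := hWg.sub hWI_int
  have hdiff' : Integrable (fun ω ↦ τ * (g ω - I ω)) μ := (hg.sub hI).const_mul τ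
  calc ∫ ω, W ω * g ω ∂μ - ∫ ω in T, W ω ∂μ
      = ∫ ω, (W ω * g ω - W ω * I ω) - τ * (g ω - I ω) ∂μ := by
        rw [integral_sub hdiff hdiff', integral_sub hWg hWI_int, integral_const_mul,
          integral_sub hg hI, hWI, integral_indicator hT, integral_indicator_one hT, hmass]
        ring
    _ = ∫ ω, (W ω - τ) * (g ω - I ω) ∂μ := by congr 1; ext ω; ring
    _ ≤ 0 := integral_nonpos_of_ae hsign

theorem stmt16_general {Ω : Type*} [MeasurableSpace Ω] (μ : Measure Ω) [IsProbabilityMeasure μ]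
    (W : Ω → ℝ) (hWm : Measurable W)
    (hWint : Integrable W μ)
    (F : ℝ → ℝ) (hF : ∀ t, F t = (μ {ω | W ω ≤ t}).toReal)
    (hFcont : Continuous F)
    (p₁ : ℝ) (hp₁ : p₁ ∈ Set.Ioc (0:ℝ) 1)
    (τ₁ : ℝ) (hτ : F τ₁ = 1 - p₁)
    (P : ℝ → ℝ) (hP01 : ∀ w, P w ∈ Set.Icc (0:ℝ) 1)
    (hPexp : ∫ ω, P (W ω) ∂μ = p₁) :
    (∫ ω, W ω * P (W ω) ∂μ ≤
      p₁ * ((∫ ω in {ω | 1 - p₁ ≤ F (W ω)}, W ω ∂μ) /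
        (μ {ω | 1 - p₁ ≤ F (W ω)}).toReal)) ∧
    p₁ * ((∫ ω in {ω | 1 - p₁ ≤ F (W ω)}, W ω ∂μ) /
        (μ {ω | 1 - p₁ ≤ F (W ω)}).toReal)
      = ∫ ω in {ω | τ₁ < W ω}, W ω ∂μ := by
  have := Measure.isProbabilityMeasure_map (μ := μ) hWm.aemeasurable
  have hF_cdf : F = cdf (μ.map W) := funext fun t ↦ by
    rw [hF, cdf_eq_real, map_measureReal_apply hWm measurableSet_Iic]; rfl
  subst hF_cdf
  have hT : MeasurableSet {ω | τ₁ < W ω} := measurableSet_lt measurable_const hWm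
  have hμT : μ.real {ω | τ₁ < W ω} = p₁ := by
    have hcompl : {ω | τ₁ < W ω} = {ω | W ω ≤ τ₁}ᶜ := by ext; simp
    rw [hcompl, probReal_compl_eq_one_sub (measurableSet_le hWm measurable_const), measureReal_def,
      ← hF, hτ, sub_sub_cancel]
  have hA : {ω | 1 - p₁ ≤ cdf (μ.map W) (W ω)} =ᵐ[μ] {ω | τ₁ < W ω} := by
    rw [← hτ]
    exact hWm.quasiMeasurePreserving μ |>.preimage_ae_eq (setOf_cdf_le_ae_eq_Ioi hFcont τ₁)
  have hthreshold : p₁ * ((∫ ω in {ω | 1 - p₁ ≤ cdf (μ.map W) (W ω)}, W ω ∂μ) /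
      (μ {ω | 1 - p₁ ≤ cdf (μ.map W) (W ω)}).toReal) = ∫ ω in {ω | τ₁ < W ω}, W ω ∂μ := by
    rw [setIntegral_congr_set hA, ← measureReal_def, measureReal_congr hA, hμT,
      mul_div_cancel₀ _ hp₁.1.ne']
  refine ⟨hthreshold ▸ ?_, hthreshold⟩
  exact integral_mul_le_setIntegral_of_integral_eq_measureReal hWint
    (Integrable.of_integral_ne_zero (hPexp ▸ hp₁.1.ne')) (ae_of_all _ fun ω ↦ hP01 (W ω)) hT
    (hPexp.trans hμT.symm)

/-- The threshold rule maximizes E[W·P(W)] subject to E[P(W)] = p₁. -/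
theorem stmt16 {Ω : Type*} [MeasurableSpace Ω] (μ : Measure Ω) [IsProbabilityMeasure μ]
    (W : Ω → ℝ) (hWm : Measurable W) (hWnn : ∀ᵐ ω ∂μ, 0 ≤ W ω)
    (hWint : Integrable W μ)
    (F : ℝ → ℝ) (hF : ∀ t, F t = (μ {ω | W ω ≤ t}).toReal)
    (hFcont : Continuous F)
    (p₁ : ℝ) (hp₁ : p₁ ∈ Set.Ioc (0:ℝ) 1)
    (τ₁ : ℝ) (hτ : F τ₁ = 1 - p₁)
    (P : ℝ → ℝ) (hPm : Measurable P) (hP01 : ∀ w, P w ∈ Set.Icc (0:ℝ) 1)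
    (hPexp : ∫ ω, P (W ω) ∂μ = p₁) :
    (∫ ω, W ω * P (W ω) ∂μ ≤
      p₁ * ((∫ ω in {ω | 1 - p₁ ≤ F (W ω)}, W ω ∂μ) /
        (μ {ω | 1 - p₁ ≤ F (W ω)}).toReal)) ∧
    p₁ * ((∫ ω in {ω | 1 - p₁ ≤ F (W ω)}, W ω ∂μ) /
        (μ {ω | 1 - p₁ ≤ F (W ω)}).toReal)
      = ∫ ω in {ω | τ₁ < W ω}, W ω ∂μ :=
  stmt16_general μ W hWm hWint F hF hFcont p₁ hp₁ τ₁ hτ P hP01 hPexp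
end

section
/- Let f : ℝ^n → ℝ be convex with subgradients g_t ∈ ∂f at points p_{t-1} in the probability simplex I, and let the mirror descent update p_t minimize g_tᵀ(p - p_{t-1}) + α·D(p ‖ p_{t-1}) over I, where D is KL divergence and p₀ = (1/n,…,1/n). Then for each t: g_tᵀ(p_t - p_{t-1}) + α·D(p_t ‖ p_{t-1}) ≥ -‖g_t‖_∞²/(2α). -/
/-!
Hölder's inequality bounds `g ⬝ (x - y)` below by `-‖g‖_∞ ‖x - y‖₁`, and Pinsker's inequality
bounds `α D(x ‖ y)` below by `α ‖x - y‖₁² / 2`; the quadratic `-G s + α s² / 2` is at least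
`-G² / (2α)`. Pinsker's inequality itself follows from Cauchy–Schwarz with the weights `x + 2y`
and the pointwise bound `3 (t - 1)² ≤ 2 (t + 2) (t log t - t + 1)`.
-/

open Finset Real InformationTheory

open Set in
lemma three_mul_sq_sub_one_le_klFun {t : ℝ} (ht : 0 ≤ t) :
    3 * (t - 1) ^ 2 ≤ 2 * (t + 2) * klFun t := by
  -- `F' = 4 G`, and `G` is increasing with `G 1 = 0`, so `F` is minimal at `1`.
  let G : ℝ → ℝ := fun s ↦ (s + 1) * log s - 2 * (s - 1)
  let F : ℝ → ℝ := fun s ↦ 2 * (s + 2) * klFun s - 3 * (s - 1) ^ 2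
  have hG' : ∀ s, 0 < s → HasDerivAt G (log s + s⁻¹ - 1) s := by
    intro s hs
    refine ((((hasDerivAt_id s).add_const 1).mul (hasDerivAt_log hs.ne')).sub
      (((hasDerivAt_id s).sub_const 1).const_mul 2)).congr_deriv ?_
    simp only [id]
    field_simp
    ring
  have hG : MonotoneOn G (Ioi 0) := by
    refine monotoneOn_of_hasDerivWithinAt_nonneg (f' := fun s ↦ log s + s⁻¹ - 1) (convex_Ioi 0)
      (fun s hs ↦ (hG' s hs).continuousAt.continuousWithinAt) (fun s hs ↦ ?_) (fun s hs ↦ ?_)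
    · rw [interior_Ioi] at hs ⊢
      exact (hG' s hs).hasDerivWithinAt
    · rw [interior_Ioi] at hs
      linarith [one_sub_inv_le_log_of_pos hs]
  have hF' : ∀ s, 0 < s → HasDerivAt F (4 * G s) s := by
    intro s hs
    refine ((((hasDerivAt_id s).add_const 2).const_mul 2).mul (hasDerivAt_klFun hs.ne')).sub
      ((((hasDerivAt_id s).sub_const 1).pow 2).const_mul 3) |>.congr_deriv ?_
    simp only [G, klFun_apply, id]
    ring
  have hFc : Continuous F := by fun_prop
  have hG1 : G 1 = 0 := by simp [G]
  have hF1 : F 1 = 0 := by simp [F, klFun_one]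
  suffices 0 ≤ F t by simpa [F, sub_nonneg] using this
  rcases le_total t 1 with h | h
  · have hanti : AntitoneOn F (Icc 0 1) := by
      refine antitoneOn_of_hasDerivWithinAt_nonpos (f' := fun s ↦ 4 * G s) (convex_Icc 0 1)
        hFc.continuousOn (fun s hs ↦ ?_) (fun s hs ↦ ?_) <;> rw [interior_Icc] at hs
      · exact (hF' s hs.1).hasDerivWithinAt
      · linarith [hG hs.1 (mem_Ioi.2 one_pos) hs.2.le]
    simpa [hF1] using hanti ⟨ht, h⟩ ⟨zero_le_one, le_rfl⟩ h
  · have hmono : MonotoneOn F (Ici 1) := by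
      refine monotoneOn_of_hasDerivWithinAt_nonneg (f' := fun s ↦ 4 * G s) (convex_Ici 1)
        hFc.continuousOn (fun s hs ↦ ?_) (fun s hs ↦ ?_) <;> rw [interior_Ici] at hs
      · exact (hF' s (one_pos.trans hs)).hasDerivWithinAt
      · linarith [hG (mem_Ioi.2 one_pos) (mem_Ioi.2 (one_pos.trans hs)) hs.le]
    simpa [hF1] using hmono self_mem_Ici h h

lemma three_mul_sq_sub_le_mul_log_div {x y : ℝ} (hx : 0 ≤ x) (hy : 0 < y) :
    3 * (x - y) ^ 2 ≤ 2 * (x + 2 * y) * (x * log (x / y) - x + y) := by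
  have h := mul_le_mul_of_nonneg_left (three_mul_sq_sub_one_le_klFun (div_nonneg hx hy.le))
    (sq_nonneg y)
  have hl : y ^ 2 * (3 * (x / y - 1) ^ 2) = 3 * (x - y) ^ 2 := by field_simp
  have hr : y ^ 2 * (2 * (x / y + 2) * klFun (x / y))
      = 2 * (x + 2 * y) * (x * log (x / y) - x + y) := by
    rw [klFun_apply]; field_simp; ring
  rwa [hl, hr] at h

/-- Pinsker's inequality for finitely supported distributions. -/
lemma sq_sum_abs_sub_le_two_mul_sum_mul_log_div {ι : Type*} [Fintype ι] {x y : ι → ℝ}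
    (hx : ∀ k, 0 ≤ x k) (hy : ∀ k, 0 < y k) (hx1 : ∑ k, x k = 1) (hy1 : ∑ k, y k = 1) :
    (∑ k, |x k - y k|) ^ 2 ≤ 2 * ∑ k, x k * log (x k / y k) := by
  have hw : ∀ k, 0 < x k + 2 * y k := fun k ↦ by linarith [hx k, hy k]
  have hw3 : ∑ k, (x k + 2 * y k) = 3 := by
    rw [sum_add_distrib, ← mul_sum, hx1, hy1]; norm_num
  -- Cauchy–Schwarz with the weights `x + 2y`, whose total mass is 3
  have hCS := sq_sum_div_le_sum_sq_div univ (fun k ↦ |x k - y k|) (fun k _ ↦ hw k)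
  have hterm : ∀ k ∈ univ, |x k - y k| ^ 2 / (x k + 2 * y k)
      ≤ 2 / 3 * (x k * log (x k / y k) - x k + y k) := fun k _ ↦ by
    rw [sq_abs, div_le_iff₀ (hw k)]
    linarith [three_mul_sq_sub_le_mul_log_div (hx k) (hy k)]
  have hsum : ∑ k, 2 / 3 * (x k * log (x k / y k) - x k + y k)
      = 2 / 3 * ∑ k, x k * log (x k / y k) := by
    rw [← mul_sum, sum_add_distrib, sum_sub_distrib, hx1, hy1, sub_add_cancel]
  rw [hw3] at hCS
  linarith [hCS.trans ((sum_le_sum hterm).trans hsum.le)]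

lemma abs_sum_mul_le_sup'_mul_sum_abs {ι : Type*} {s : Finset ι} (hs : s.Nonempty)
    (g v : ι → ℝ) : |∑ k ∈ s, g k * v k| ≤ s.sup' hs (fun k ↦ |g k|) * ∑ k ∈ s, |v k| :=
  calc |∑ k ∈ s, g k * v k|
      ≤ ∑ k ∈ s, |g k| * |v k| := by
        simpa only [abs_mul] using abs_sum_le_sum_abs (fun k ↦ g k * v k) s
    _ ≤ ∑ k ∈ s, s.sup' hs (fun k ↦ |g k|) * |v k| :=
        sum_le_sum fun k hk ↦
          mul_le_mul_of_nonneg_right (le_sup' (fun k ↦ |g k|) hk) (abs_nonneg _)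
    _ = s.sup' hs (fun k ↦ |g k|) * ∑ k ∈ s, |v k| := (mul_sum _ _ _).symm

lemma neg_sq_sup'_div_le_sum_mul_sub_add_mul_sum_mul_log_div {ι : Type*} [Fintype ι]
    (hι : (univ : Finset ι).Nonempty) {α : ℝ} (hα : 0 < α) (g : ι → ℝ) {x y : ι → ℝ}
    (hx : ∀ k, 0 ≤ x k) (hy : ∀ k, 0 < y k) (hx1 : ∑ k, x k = 1) (hy1 : ∑ k, y k = 1) :
    -(univ.sup' hι fun k ↦ |g k|) ^ 2 / (2 * α)
      ≤ ∑ k, g k * (x k - y k) + α * ∑ k, x k * log (x k / y k) := by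
  set G := univ.sup' hι fun k ↦ |g k|
  set S := ∑ k, |x k - y k|
  have hHolder := abs_sum_mul_le_sup'_mul_sum_abs hι g (fun k ↦ x k - y k)
  have hPinsker := sq_sum_abs_sub_le_two_mul_sum_mul_log_div hx hy hx1 hy1
  have hAMGM : -G ^ 2 / (2 * α) ≤ -(G * S) + α * (S ^ 2 / 2) := by
    rw [div_le_iff₀ (by positivity)]
    nlinarith [sq_nonneg (α * S - G)]
  calc -G ^ 2 / (2 * α) ≤ -(G * S) + α * (S ^ 2 / 2) := hAMGM
    _ ≤ ∑ k, g k * (x k - y k) + α * ∑ k, x k * log (x k / y k) := by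
      gcongr
      · linarith [neg_abs_le (∑ k, g k * (x k - y k))]
      · linarith

theorem stmt18_general (n : ℕ) (hn : 0 < n) (α : ℝ) (hα : 0 < α)
    (p : ℕ → Fin n → ℝ) (g : ℕ → Fin n → ℝ)
    (hmem : ∀ t, (∀ k, 0 ≤ p t k) ∧ ∑ k, p t k = 1)
    (hpos : ∀ t k, 0 < p t k) :
    ∀ t, -(Finset.univ.sup' ⟨⟨0, hn⟩, Finset.mem_univ _⟩ (fun k => |g (t+1) k|))^2 / (2*α)
      ≤ (∑ k, g (t+1) k * (p (t+1) k - p t k))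
        + α * ∑ k, p (t+1) k * Real.log (p (t+1) k / p t k) := fun t ↦
  neg_sq_sup'_div_le_sum_mul_sub_add_mul_sum_mul_log_div _ hα (g (t + 1))
    (hmem (t + 1)).1 (hpos t) (hmem (t + 1)).2 (hmem t).2

/-- Per-step lower bound for mirror descent on the simplex via Hölder + Pinsker. -/
theorem stmt18 (n : ℕ) (hn : 0 < n) (α : ℝ) (hα : 0 < α)
    (f : (Fin n → ℝ) → ℝ) (hf : ConvexOn ℝ Set.univ f)
    (p : ℕ → Fin n → ℝ) (g : ℕ → Fin n → ℝ)
    (hp0 : ∀ k, p 0 k = 1 / n)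
    (hmem : ∀ t, (∀ k, 0 ≤ p t k) ∧ ∑ k, p t k = 1)
    (hpos : ∀ t k, 0 < p t k)
    (hsub : ∀ t (q : Fin n → ℝ), f (p t) + ∑ k, g (t+1) k * (q k - p t k) ≤ f q)
    (hmin : ∀ t (q : Fin n → ℝ), (∀ k, 0 ≤ q k) → ∑ k, q k = 1 →
      (∑ k, g (t+1) k * (p (t+1) k - p t k))
          + α * ∑ k, p (t+1) k * Real.log (p (t+1) k / p t k)
        ≤ (∑ k, g (t+1) k * (q k - p t k))
          + α * ∑ k, q k * Real.log (q k / p t k)) :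
    ∀ t, -(Finset.univ.sup' ⟨⟨0, hn⟩, Finset.mem_univ _⟩ (fun k => |g (t+1) k|))^2 / (2*α)
      ≤ (∑ k, g (t+1) k * (p (t+1) k - p t k))
        + α * ∑ k, p (t+1) k * Real.log (p (t+1) k / p t k) :=
  stmt18_general n hn α hα p g hmem hpos
end
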